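/- Let a, b, c, v be real constants with a > 0, b > 0, v > 0, let π : (0, ∞) → ℝ be continuous and f : [0, ∞) → ℝ be continuous. With C(t, s) := (1 − s·a·b^(−2v)·Γ(2v, bt)·e^(bt)) / (s·e^(bt)), A(t, s) := s·e^(bt) / (1 − s·e^(bt)·a·b^(−2v)·(Γ(2v, bt) − Γ(2v))), G(t; C) := ∫_0^t c / (a·b^(−2v)·Γ(2v, bμ)·e^(bμ) + e^(bμ)·C) dμ, and ω(t, s) := e^(−G(t; C(t,s)))·π(A(t, s)) + e^(−G(t; C(t,s)))·∫_0^t f(τ)·e^(G(τ; C(t,s))) dτ, one has, for every fixed s > 0, the initial condition lim_{t → 0⁺} ω(t, s) = π(s). -/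

import Mathlib

open Real MeasureTheory intervalIntegral

/-- The upper incomplete gamma function `Γ(q, p) = ∫_p^∞ x^(q−1) e^(−x) dx`;
`upperGamma q 0` is the usual gamma function `Γ(q)`. -/
noncomputable def upperGamma (q p : ℝ) : ℝ := ∫ x in Set.Ioi p, x ^ (q - 1) * Real.exp (-x)

/-- The denominator `a·b^(−2v)·Γ(2v, bμ)·e^(bμ) + e^(bμ)·C`. -/
noncomputable def Dfun (a b v C μ : ℝ) : ℝ :=
  a * b ^ (-(2 * v)) * upperGamma (2 * v) (b * μ) * Real.exp (b * μ) + Real.exp (b * μ) * C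

/-- `G(t; C) = ∫_0^t c / (a·b^(−2v)·Γ(2v, bμ)·e^(bμ) + e^(bμ)·C) dμ`. -/
noncomputable def Gfun (a b c v C t : ℝ) : ℝ :=
  ∫ μ in (0 : ℝ)..t, c / Dfun a b v C μ

/-- The characteristic constant `C(t, s) = (1 − s·a·b^(−2v)·Γ(2v, bt)·e^(bt)) / (s·e^(bt))`. -/
noncomputable def Cfun (a b v t s : ℝ) : ℝ :=
  (1 - s * a * b ^ (-(2 * v)) * upperGamma (2 * v) (b * t) * Real.exp (b * t)) /
    (s * Real.exp (b * t))

/-- The argument `A(t, s) = s·e^(bt) / (1 − s·e^(bt)·a·b^(−2v)·(Γ(2v, bt) − Γ(2v)))`. -/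
noncomputable def Afun (a b v t s : ℝ) : ℝ :=
  s * Real.exp (b * t) /
    (1 - s * Real.exp (b * t) * a * b ^ (-(2 * v)) *
      (upperGamma (2 * v) (b * t) - upperGamma (2 * v) 0))

/-- The general solution
`ω(t, s) = e^(−G(t; C(t,s)))·π(A(t, s)) + e^(−G(t; C(t,s)))·∫_0^t f(τ)·e^(G(τ; C(t,s))) dτ`. -/
noncomputable def omegaSol (a b c v : ℝ) (piT f : ℝ → ℝ) (t s : ℝ) : ℝ :=
  Real.exp (-Gfun a b c v (Cfun a b v t s) t) * piT (Afun a b v t s) +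
    Real.exp (-Gfun a b c v (Cfun a b v t s) t) *
      ∫ τ in (0 : ℝ)..t, f τ * Real.exp (Gfun a b c v (Cfun a b v t s) τ)
/-!
As `t → 0⁺`, `A(t, s) → s` because `Γ(2v, ·)` is continuous, so `π(A(t, s)) → π(s)`.
Along `C = C(t, s)` the denominator of `G` is
`e^(bμ)·(a·b^(−2v)·(Γ(2v, bμ) − Γ(2v, bt)) + e^(−bt)/s) ≥ e^(−bt)/s` for `0 ≤ μ ≤ t`,
since `Γ(2v, ·)` is decreasing. So the integrands of `G(·; C(t, s))` and of the source term
stay bounded for small `t`, and both integrals over `[0, t]` are `O(t)`; hence `e^(−G) → 1`.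
-/

open Filter Topology Set

section UpperGamma

variable {q : ℝ}

lemma intervalIntegrable_upperGamma_integrand (hq : 0 < q) (x y : ℝ) :
    IntervalIntegrable (fun u : ℝ => u ^ (q - 1) * exp (-u)) volume x y :=
  (intervalIntegral.intervalIntegrable_rpow' (by linarith)).mul_continuousOn
    (continuous_exp.comp continuous_neg).continuousOn

lemma integrableOn_Ioi_upperGamma_integrand (hq : 0 < q) :
    IntegrableOn (fun u : ℝ => u ^ (q - 1) * exp (-u)) (Ioi 0) :=
  (GammaIntegral_convergent hq).congr_fun (fun _ _ => mul_comm _ _) measurableSet_Ioi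

lemma upperGamma_eq_integral_add_upperGamma_zero (hq : 0 < q) (p : ℝ) :
    upperGamma q p = (∫ u in p..0, u ^ (q - 1) * exp (-u)) + upperGamma q 0 :=
  (intervalIntegral.integral_interval_add_Ioi' (intervalIntegrable_upperGamma_integrand hq p 0)
    (integrableOn_Ioi_upperGamma_integrand hq)).symm

lemma continuous_upperGamma (hq : 0 < q) : Continuous (upperGamma q) := by
  have hprim := intervalIntegral.continuous_primitive
    (intervalIntegrable_upperGamma_integrand hq) 0
  have h : upperGamma q =
      fun p => -(∫ u in (0 : ℝ)..p, u ^ (q - 1) * exp (-u)) + upperGamma q 0 := by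
    ext p
    rw [upperGamma_eq_integral_add_upperGamma_zero hq, intervalIntegral.integral_symm]
  rw [h]
  exact hprim.neg.add continuous_const

lemma antitoneOn_upperGamma (hq : 0 < q) : AntitoneOn (upperGamma q) (Ici 0) := by
  intro p₁ hp₁ p₂ hp₂ hp
  rw [upperGamma, upperGamma, ← intervalIntegral.integral_interval_add_Ioi'
    (intervalIntegrable_upperGamma_integrand hq p₁ p₂)
    ((integrableOn_Ioi_upperGamma_integrand hq).mono_set (Ioi_subset_Ioi hp₂))]
  refine le_add_of_nonneg_left (intervalIntegral.integral_nonneg hp fun u hu => ?_)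
  have : (0 : ℝ) ≤ u := le_trans hp₁ hu.1
  positivity

end UpperGamma

section Characteristics

variable {a b c v s t μ : ℝ}

lemma Dfun_Cfun_eq (hs : s ≠ 0) :
    Dfun a b v (Cfun a b v t s) μ = exp (b * μ) *
      (a * b ^ (-(2 * v)) * (upperGamma (2 * v) (b * μ) - upperGamma (2 * v) (b * t)) +
        exp (-(b * t)) / s) := by
  rw [Dfun, Cfun, exp_neg]
  field_simp
  ring

lemma exp_neg_div_le_Dfun_Cfun (ha : 0 ≤ a) (hb : 0 ≤ b) (hv : 0 < v) (hs : 0 < s)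
    (hμ : 0 ≤ μ) (hμt : μ ≤ t) :
    exp (-(b * t)) / s ≤ Dfun a b v (Cfun a b v t s) μ := by
  have hΓ : upperGamma (2 * v) (b * t) ≤ upperGamma (2 * v) (b * μ) :=
    antitoneOn_upperGamma (by positivity) (mem_Ici.2 (by positivity))
      (mem_Ici.2 (by nlinarith)) (by nlinarith)
  have hgap :
      0 ≤ a * b ^ (-(2 * v)) * (upperGamma (2 * v) (b * μ) - upperGamma (2 * v) (b * t)) :=
    mul_nonneg (by positivity) (sub_nonneg.2 hΓ)
  rw [Dfun_Cfun_eq hs.ne']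
  calc exp (-(b * t)) / s ≤ exp (b * μ) * (exp (-(b * t)) / s) :=
        le_mul_of_one_le_left (by positivity) (one_le_exp (by positivity))
    _ ≤ _ := by gcongr; exact le_add_of_nonneg_left hgap

lemma norm_div_Dfun_Cfun_le (ha : 0 ≤ a) (hb : 0 ≤ b) (hv : 0 < v) (hs : 0 < s)
    (hμ : 0 ≤ μ) (hμt : μ ≤ t) :
    ‖c / Dfun a b v (Cfun a b v t s) μ‖ ≤ |c| * s * exp (b * t) := by
  have hD := exp_neg_div_le_Dfun_Cfun ha hb hv hs hμ hμt
  have hpos : 0 < exp (-(b * t)) / s := by positivity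
  calc ‖c / Dfun a b v (Cfun a b v t s) μ‖ = |c| / Dfun a b v (Cfun a b v t s) μ := by
        rw [norm_div, Real.norm_eq_abs, Real.norm_of_nonneg (hpos.trans_le hD).le]
    _ ≤ |c| / (exp (-(b * t)) / s) := by gcongr
    _ = |c| * s * exp (b * t) := by rw [exp_neg]; field_simp

lemma norm_Gfun_Cfun_le (ha : 0 ≤ a) (hb : 0 ≤ b) (hv : 0 < v) (hs : 0 < s) {τ : ℝ}
    (hτ : 0 ≤ τ) (hτt : τ ≤ t) :
    ‖Gfun a b c v (Cfun a b v t s) τ‖ ≤ |c| * s * exp (b * t) * τ := by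
  have h := intervalIntegral.norm_integral_le_of_norm_le_const (a := 0) (b := τ)
    (f := fun μ => c / Dfun a b v (Cfun a b v t s) μ) fun μ hμ => by
      rw [uIoc_of_le hτ] at hμ
      exact norm_div_Dfun_Cfun_le ha hb hv hs hμ.1.le (hμ.2.trans hτt)
  rwa [sub_zero, abs_of_nonneg hτ] at h

end Characteristics

lemma tendsto_intervalIntegral_nhdsGT_zero_of_norm_le {g : ℝ → ℝ → ℝ} {K : ℝ}
    (hg : ∀ᶠ t in 𝓝[>] 0, ∀ τ ∈ Ioc 0 t, ‖g t τ‖ ≤ K) :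
    Tendsto (fun t => ∫ τ in (0 : ℝ)..t, g t τ) (𝓝[>] 0) (𝓝 0) := by
  have hlin : Tendsto (fun t : ℝ => K * t) (𝓝[>] 0) (𝓝 0) := by
    simpa using ((continuous_const_mul K).tendsto 0).mono_left nhdsWithin_le_nhds
  refine squeeze_zero_norm' ?_ hlin
  filter_upwards [hg, self_mem_nhdsWithin] with t ht (htpos : 0 < t)
  have h := intervalIntegral.norm_integral_le_of_norm_le_const (a := 0) (b := t)
    fun τ hτ => ht τ (by rwa [uIoc_of_le htpos.le] at hτ)
  rwa [sub_zero, abs_of_pos htpos] at h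

section InitialValue

variable {a b c v s : ℝ}

lemma Afun_zero : Afun a b v 0 s = s := by
  simp [Afun]

lemma continuousAt_Afun (hv : 0 < v) : ContinuousAt (fun t => Afun a b v t s) 0 := by
  have hΓ : Continuous fun t => upperGamma (2 * v) (b * t) :=
    (continuous_upperGamma (by positivity)).comp (continuous_const_mul b)
  refine ContinuousAt.div (by fun_prop) (Continuous.continuousAt ?_) (by simp)
  fun_prop

lemma tendsto_Gfun_Cfun (ha : 0 ≤ a) (hb : 0 ≤ b) (hv : 0 < v) (hs : 0 < s) :
    Tendsto (fun t => Gfun a b c v (Cfun a b v t s) t) (𝓝[>] 0) (𝓝 0) := by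
  refine tendsto_intervalIntegral_nhdsGT_zero_of_norm_le (K := |c| * s * exp b) ?_
  filter_upwards [Ioc_mem_nhdsGT zero_lt_one] with t ht μ hμ
  calc _ ≤ |c| * s * exp (b * t) := norm_div_Dfun_Cfun_le ha hb hv hs hμ.1.le hμ.2
    _ ≤ |c| * s * exp b := by gcongr; nlinarith [ht.2]

lemma tendsto_integral_mul_exp_Gfun_Cfun {f : ℝ → ℝ} (ha : 0 ≤ a) (hb : 0 ≤ b) (hv : 0 < v)
    (hs : 0 < s) (hf : ContinuousOn f (Icc 0 1)) :
    Tendsto (fun t => ∫ τ in (0 : ℝ)..t, f τ * exp (Gfun a b c v (Cfun a b v t s) τ))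
      (𝓝[>] 0) (𝓝 0) := by
  obtain ⟨M, hM⟩ := isCompact_Icc.exists_bound_of_continuousOn hf
  refine tendsto_intervalIntegral_nhdsGT_zero_of_norm_le (K := M * exp (|c| * s * exp b)) ?_
  filter_upwards [Ioc_mem_nhdsGT zero_lt_one] with t ht τ hτ
  have hG : Gfun a b c v (Cfun a b v t s) τ ≤ |c| * s * exp b :=
    calc _ ≤ ‖Gfun a b c v (Cfun a b v t s) τ‖ := le_norm_self _
      _ ≤ |c| * s * exp (b * t) * τ := norm_Gfun_Cfun_le ha hb hv hs hτ.1.le hτ.2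
      _ ≤ |c| * s * exp b * 1 := by
        gcongr
        · exact hτ.1.le
        · nlinarith [ht.2]
        · exact hτ.2.trans ht.2
      _ = |c| * s * exp b := mul_one _
  rw [norm_mul, Real.norm_of_nonneg (exp_pos _).le]
  exact mul_le_mul (hM τ ⟨hτ.1.le, hτ.2.trans ht.2⟩) (exp_le_exp.2 hG) (exp_pos _).le
    ((norm_nonneg _).trans (hM τ ⟨hτ.1.le, hτ.2.trans ht.2⟩))

end InitialValue

/-- The initial-value assertion of Lemma 1: for every fixed `s > 0`,
`lim_{t → 0⁺} ω(t, s) = π(s)`. -/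
theorem stmt6 (a b c v : ℝ) (ha : 0 < a) (hb : 0 < b) (hv : 0 < v)
    (piT f : ℝ → ℝ) (hπ : ContinuousOn piT (Set.Ioi 0)) (hf : ContinuousOn f (Set.Ici 0))
    (s : ℝ) (hs : 0 < s) :
    Filter.Tendsto (fun t : ℝ => omegaSol a b c v piT f t s)
      (nhdsWithin 0 (Set.Ioi 0)) (nhds (piT s)) := by
  have hA : Tendsto (fun t => Afun a b v t s) (𝓝[>] 0) (𝓝 s) := by
    simpa only [Afun_zero] using (continuousAt_Afun hv).tendsto.mono_left nhdsWithin_le_nhds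
  have hπA : Tendsto (fun t => piT (Afun a b v t s)) (𝓝[>] 0) (𝓝 (piT s)) :=
    (hπ.continuousAt (Ioi_mem_nhds hs)).tendsto.comp hA
  have hexpG : Tendsto (fun t => exp (-Gfun a b c v (Cfun a b v t s) t)) (𝓝[>] 0) (𝓝 1) := by
    simpa using (tendsto_Gfun_Cfun ha.le hb.le hv hs).neg.rexp
  have hI := tendsto_integral_mul_exp_Gfun_Cfun (c := c) ha.le hb.le hv hs
    (hf.mono Icc_subset_Ici_self)
  simpa [omegaSol] using (hexpG.mul hπA).add (hexpG.mul hI)
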